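/- The plane curve C₂₀ defined by Z²⁰ + F₂₀(X,Y) = 0 is smooth: there is no nonzero vector (x,y,z) ∈ ℂ³ at which all three partial derivatives of the polynomial Z²⁰ + F₂₀(X,Y) vanish simultaneously. -/

import Mathlib

noncomputable section
open MvPolynomial

/-- `G = Z²⁰ + F₂₀(X, Y)` with `X = X 0`, `Y = X 1`, `Z = X 2`. -/
def G20 : MvPolynomial (Fin 3) ℂ :=
  X 2 ^ 20 +
    (X 0 ^ 20 - 228 * (X 0 ^ 15 * X 1 ^ 5 - X 0 ^ 5 * X 1 ^ 15)
      + 494 * X 0 ^ 10 * X 1 ^ 10 + X 1 ^ 20)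

/-!
`∂G/∂Z = 20 Z¹⁹` forces `z = 0`. Put `a = x⁵`, `b = y⁵`; then `F₂₀(x, y) = f(a, b)` for the
binary quartic `f = icosaQuartic`, and `∂F₂₀/∂X = 20 x⁴ q(a, b)`, `∂F₂₀/∂Y = 20 y⁴ q(b, -a)` for the
cubic `q = icosaCubic = ¼ ∂f/∂a`. At a common zero of the partials, Euler's identity gives
`f(a, b) = 0`. If `a ≠ 0` then also `q(a, b) = 0`, and since `f` has nonzero discriminant this forces
`b = 0`, hence `f(a, 0) = a⁴ = 0`; so `a = 0`, and then `f(0, b) = b⁴ = 0`.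
-/

section IcosahedralQuartic

variable {K : Type*}

def icosaQuartic [CommRing K] (a b : K) : K :=
  a ^ 4 - 228 * (a ^ 3 * b - a * b ^ 3) + 494 * a ^ 2 * b ^ 2 + b ^ 4

def icosaCubic [CommRing K] (a b : K) : K :=
  a ^ 3 - 171 * a ^ 2 * b + 247 * a * b ^ 2 + 57 * b ^ 3

theorem icosaQuartic_eq [CommRing K] (a b : K) :
    icosaQuartic a b = a * icosaCubic a b + b * icosaCubic b (-a) := by
  unfold icosaQuartic icosaCubic; ring

variable [Field K] [CharZero K]

/-- The resultant of the quartic and its `a`-derivative is a nonzero multiple of `b⁶`. -/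
theorem eq_zero_of_icosaQuartic_eq_zero_of_icosaCubic_eq_zero {a b : K}
    (hf : icosaQuartic a b = 0) (hq : icosaCubic a b = 0) : b = 0 := by
  unfold icosaQuartic icosaCubic at *
  have : b ^ 6 = 0 := by
    linear_combination
      ((-133 * a ^ 2 + 22762 * a * b - 36117 * b ^ 2) / 937500) * hf +
      ((133 * a ^ 3 - 30343 * a ^ 2 * b + 70051 * a * b ^ 2 + 17081 * b ^ 3) / 937500) * hq
  exact eq_zero_of_pow_eq_zero this

theorem eq_zero_of_mul_icosaCubic_eq_zero {a b : K}
    (ha : a * icosaCubic a b = 0) (hb : b * icosaCubic b (-a) = 0) : a = 0 ∧ b = 0 := by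
  have hf : icosaQuartic a b = 0 := by rw [icosaQuartic_eq, ha, hb, add_zero]
  have ha0 : a = 0 := by
    by_contra ha0
    have hb0 := eq_zero_of_icosaQuartic_eq_zero_of_icosaCubic_eq_zero hf
      ((mul_eq_zero.mp ha).resolve_left ha0)
    exact ha0 (eq_zero_of_pow_eq_zero (n := 4) (by simpa [icosaQuartic, hb0] using hf))
  exact ⟨ha0, eq_zero_of_pow_eq_zero (n := 4) (by simpa [icosaQuartic, ha0] using hf)⟩

end IcosahedralQuartic

theorem eval_pderiv_G20 (v : Fin 3 → ℂ) :
    eval v (pderiv 0 G20) = 20 * v 0 ^ 4 * icosaCubic (v 0 ^ 5) (v 1 ^ 5) ∧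
    eval v (pderiv 1 G20) = 20 * v 1 ^ 4 * icosaCubic (v 1 ^ 5) (-v 0 ^ 5) ∧
    eval v (pderiv 2 G20) = 20 * v 2 ^ 19 := by
  have h228 : ∀ i : Fin 3, pderiv i (228 : MvPolynomial (Fin 3) ℂ) = 0 := fun i => by
    rw [← map_ofNat C 228, pderiv_C]
  have h494 : ∀ i : Fin 3, pderiv i (494 : MvPolynomial (Fin 3) ℂ) = 0 := fun i => by
    rw [← map_ofNat C 494, pderiv_C]
  simp only [G20, map_add, map_sub, map_mul, map_pow, map_zero, Derivation.leibniz_pow,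
    Derivation.leibniz, pderiv_X, h228, h494, Pi.single_eq_same, ne_eq, Fin.reduceEq,
    not_false_eq_true, Pi.single_eq_of_ne, one_ne_zero, zero_ne_one, smul_eq_mul, nsmul_eq_mul,
    mul_zero, mul_one, zero_add, add_zero, sub_self, Nat.cast_ofNat, eval_ofNat, eval_X,
    icosaCubic, and_true]
  refine ⟨?_, ?_⟩ <;> ring

theorem stmt4 :
    ¬ ∃ v : Fin 3 → ℂ, v ≠ 0 ∧ ∀ i : Fin 3, eval v (pderiv i G20) = 0 := by
  rintro ⟨v, hv, h⟩
  obtain ⟨h0, h1, h2⟩ := eval_pderiv_G20 v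
  have hxy := eq_zero_of_mul_icosaCubic_eq_zero (a := v 0 ^ 5) (b := v 1 ^ 5)
    (by linear_combination (v 0 / 20) * (h0.symm.trans (h 0)))
    (by linear_combination (v 1 / 20) * (h1.symm.trans (h 1)))
  apply hv
  funext i
  fin_cases i
  · exact eq_zero_of_pow_eq_zero hxy.1
  · exact eq_zero_of_pow_eq_zero hxy.2
  · simpa [h 2] using h2
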